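/- There exists a constant C = C(n,m) such that for every measurable set Ω ⊆ ℝ^n×ℝ^m of finite Lebesgue measure, |{(x,y) ∈ ℝ^n×ℝ^m : M_s(χ_Ω)(x,y) > 1/100}| ≤ C·|Ω|. -/
import Mathlib


open MeasureTheory Filter
open scoped ENNReal NNReal BigOperators

noncomputable section

/-- Points of `ℝ^n × ℝ^m`. -/
abbrev Pt (n m : ℕ) := (Fin n → ℝ) × (Fin m → ℝ)

/-- An open cube in `ℝ^d` with center `c` and half side length `r`. -/
def openCube {d : ℕ} (c : Fin d → ℝ) (r : ℝ) : Set (Fin d → ℝ) :=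
  {x | ∀ i, |x i - c i| < r}

/-- The strong maximal function on `ℝ^n × ℝ^m`: the supremum of averages of `|f|`
over products of open cubes `Q₁ × Q₂` containing the point. -/
def Ms {n m : ℕ} (f : Pt n m → ℝ) (x : Pt n m) : ℝ≥0∞ :=
  ⨆ (c₁ : Fin n → ℝ) (r₁ : ℝ) (c₂ : Fin m → ℝ) (r₂ : ℝ)
    (_ : 0 < r₁) (_ : 0 < r₂) (_ : x ∈ openCube c₁ r₁ ×ˢ openCube c₂ r₂),
    (volume (openCube c₁ r₁ ×ˢ openCube c₂ r₂))⁻¹ *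
      ∫⁻ y in openCube c₁ r₁ ×ˢ openCube c₂ r₂, ‖f y‖₊

section Aux

open Set Metric

lemma openCube_eq_ball {d : ℕ} (c : Fin d → ℝ) {r : ℝ} (hr : 0 < r) :
    openCube c r = Metric.ball c r := by
  ext x
  simp only [openCube, mem_setOf_eq, mem_ball, dist_pi_lt_iff hr, Real.dist_eq]

/-- The "maximal set" at level `lam` for the set `A`. -/
def weakSet (d : ℕ) (lam : ℝ≥0∞) (A : Set (Fin d → ℝ)) : Set (Fin d → ℝ) :=
  {x | ∃ c r, 0 < r ∧ x ∈ Metric.ball c r ∧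
    lam * volume (Metric.ball c r) < volume (A ∩ Metric.ball c r)}

lemma le_inv_mul_of_mul_lt {lam v w : ℝ≥0∞} (h0 : lam ≠ 0) (ht : lam ≠ ⊤)
    (h : lam * v < w) : v ≤ lam⁻¹ * w := by
  calc v = lam⁻¹ * (lam * v) := by
        rw [← mul_assoc, ENNReal.inv_mul_cancel h0 ht, one_mul]
    _ ≤ lam⁻¹ * w := mul_le_mul_right h.le _

/-- Weak type (1,1) bound for the (one-parameter) Hardy–Littlewood maximal operator
over sup-metric balls (i.e. cubes) in `ℝ^d`. -/
lemma weak_bound {d : ℕ} (hd : 1 ≤ d) (lam : ℝ≥0∞) (h0 : lam ≠ 0) (ht : lam ≠ ⊤)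
    (A : Set (Fin d → ℝ)) (hA : MeasurableSet A) :
    volume (weakSet d lam A) ≤ 5 ^ d * lam⁻¹ * volume A := by
  rcases eq_or_ne (volume A) ⊤ with hvA | hvA
  · rw [hvA, ENNReal.mul_top]
    · exact le_top
    · simp [pow_eq_zero_iff, ENNReal.inv_ne_zero, ht]
  -- radius bound
  have hball_le : ∀ (c : Fin d → ℝ) (r : ℝ), 0 < r →
      lam * volume (Metric.ball c r) < volume (A ∩ Metric.ball c r) →
      volume (Metric.ball c r) ≤ lam⁻¹ * volume A := by
    intro c r hr h
    exact le_inv_mul_of_mul_lt h0 ht (h.trans_le (measure_mono inter_subset_left))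
  set K : ℝ := (lam⁻¹ * volume A).toReal with hK
  have hKfin : lam⁻¹ * volume A ≠ ⊤ := by
    exact ENNReal.mul_ne_top (ENNReal.inv_ne_top.2 h0) hvA
  have hr_le : ∀ (c : Fin d → ℝ) (r : ℝ), 0 < r →
      lam * volume (Metric.ball c r) < volume (A ∩ Metric.ball c r) →
      r ≤ max K 1 / 2 := by
    intro c r hr h
    have h1 : volume (Metric.ball c r) ≤ lam⁻¹ * volume A := hball_le c r hr h
    rw [Real.volume_pi_ball _ hr] at h1
    have h2 : (2 * r) ^ d ≤ K := by
      rw [hK]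
      have h1t := ENNReal.toReal_mono hKfin h1
      rwa [ENNReal.toReal_ofReal (by positivity), Fintype.card_fin] at h1t
    by_contra hcon
    push_neg at hcon
    have h3 : max K 1 < 2 * r := by linarith
    have h4 : (1:ℝ) ≤ 2 * r := le_of_lt (lt_of_le_of_lt (le_max_right _ _) h3)
    have h5 : 2 * r ≤ (2 * r) ^ d := le_self_pow₀ h4 (by omega)
    have : K < K := lt_of_lt_of_le (lt_of_le_of_lt (le_max_left _ _) h3) (h5.trans h2)
    exact this.false
  -- Vitali
  set t : Set ((Fin d → ℝ) × ℝ) := {p | 0 < p.2 ∧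
    lam * volume (Metric.ball p.1 p.2) < volume (A ∩ Metric.ball p.1 p.2)} with hts
  obtain ⟨u, hut, hdisj, hcov⟩ :=
    Vitali.exists_disjoint_subfamily_covering_enlargement_closedBall t Prod.fst Prod.snd
      (max K 1 / 2) (fun p hp => hr_le p.1 p.2 hp.1 hp.2) 4 (by norm_num)
  have hucnt : u.Countable := by
    apply hdisj.countable_of_nonempty_interior
    intro p hp
    have hp' := hut hp
    refine ⟨p.1, ?_⟩
    rw [mem_interior_iff_mem_nhds]
    exact Filter.mem_of_superset (Metric.ball_mem_nhds _ hp'.1) Metric.ball_subset_closedBall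
  have hsub : weakSet d lam A ⊆ ⋃ p ∈ u, Metric.closedBall p.1 (4 * p.2) := by
    rintro x ⟨c, r, hr, hx, h⟩
    obtain ⟨q, hq, hsub⟩ := hcov (c, r) ⟨hr, h⟩
    exact mem_biUnion hq (hsub (Metric.ball_subset_closedBall hx))
  calc volume (weakSet d lam A)
      ≤ ∑' p : u, volume (Metric.closedBall p.1.1 (4 * p.1.2)) :=
        (measure_mono hsub).trans (measure_biUnion_le _ hucnt _)
    _ ≤ ∑' p : u, 5 ^ d * lam⁻¹ * volume (A ∩ Metric.ball p.1.1 p.1.2) := by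
        apply ENNReal.tsum_le_tsum
        intro p
        obtain ⟨hpr, hplt⟩ := hut p.2
        have h5d : (5:ℝ≥0∞) ^ d = ENNReal.ofReal ((5:ℝ) ^ d) := by
          rw [ENNReal.ofReal_pow (by norm_num), ENNReal.ofReal_ofNat]
        have h45 : volume (Metric.closedBall p.1.1 (4 * p.1.2)) ≤
            5 ^ d * volume (Metric.ball p.1.1 p.1.2) := by
          rw [Real.volume_pi_closedBall _ (by positivity), Real.volume_pi_ball _ hpr, h5d,
            ← ENNReal.ofReal_mul (by positivity), Fintype.card_fin]
          apply ENNReal.ofReal_le_ofReal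
          calc (2 * (4 * p.1.2)) ^ d = 4 ^ d * (2 * p.1.2) ^ d := by
                rw [show (2 * (4 * p.1.2)) = 4 * (2 * p.1.2) by ring, mul_pow]
            _ ≤ 5 ^ d * (2 * p.1.2) ^ d := by gcongr; norm_num
        calc volume (Metric.closedBall p.1.1 (4 * p.1.2))
            ≤ 5 ^ d * volume (Metric.ball p.1.1 p.1.2) := h45
          _ ≤ 5 ^ d * (lam⁻¹ * volume (A ∩ Metric.ball p.1.1 p.1.2)) :=
              mul_le_mul_right (le_inv_mul_of_mul_lt h0 ht hplt) _
          _ = 5 ^ d * lam⁻¹ * volume (A ∩ Metric.ball p.1.1 p.1.2) := (mul_assoc _ _ _).symm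
    _ = 5 ^ d * lam⁻¹ * ∑' p : u, volume (A ∩ Metric.ball p.1.1 p.1.2) :=
        ENNReal.tsum_mul_left
    _ ≤ 5 ^ d * lam⁻¹ * volume A := by
        apply mul_le_mul_right
        rw [← measure_biUnion hucnt _ (fun p hp => hA.inter measurableSet_ball)]
        · exact measure_mono (iUnion₂_subset fun p hp => inter_subset_left)
        · intro p hp q hq hpq
          have := hdisj hp hq hpq
          exact this.mono
            (inter_subset_right.trans Metric.ball_subset_closedBall)
            (inter_subset_right.trans Metric.ball_subset_closedBall)

/-- If the maximal inequality holds for some ball, it holds for a ball with center in a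
given dense set and rational radius. -/
lemma exists_rat_ball {d : ℕ} (A : Set (Fin d → ℝ)) (lam : ℝ≥0∞) {D : Set (Fin d → ℝ)}
    (hD : Dense D) {y c : Fin d → ℝ} {r : ℝ} (hr : 0 < r) (hy : y ∈ Metric.ball c r)
    (h : lam * volume (Metric.ball c r) < volume (A ∩ Metric.ball c r)) :
    ∃ c' ∈ D, ∃ q : ℚ, 0 < (q:ℝ) ∧ y ∈ Metric.ball c' (q:ℝ) ∧
      lam * volume (Metric.ball c' (q:ℝ)) < volume (A ∩ Metric.ball c' (q:ℝ)) := by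
  rw [mem_ball] at hy
  set δ : ℝ := r - dist y c with hδ
  have hδpos : 0 < δ := by simp [hδ]; linarith
  set u : ℕ → ℝ := fun k => r - δ / (k + 2) with hu
  have huy : ∀ k, dist y c < u k := by
    intro k
    have h1 : δ / (k + 2) ≤ δ / 2 := by
      apply div_le_div_of_nonneg_left hδpos.le (by norm_num)
        (by linarith [Nat.cast_nonneg (α := ℝ) k])
    have : δ / 2 < δ := by linarith
    simp only [hu, hδ]
    nlinarith [dist_nonneg (x := y) (y := c)]
  have hultr : ∀ k, u k < r := by
    intro k
    have : 0 < δ / (k + 2) := div_pos hδpos (by positivity)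
    simp only [hu]; linarith
  have humono : Monotone u := by
    intro a b hab
    simp only [hu]
    have hba : (a:ℝ) + 2 ≤ (b:ℝ) + 2 := by
      have : (a:ℝ) ≤ b := Nat.cast_le.2 hab
      linarith
    have : δ / (b + 2) ≤ δ / (a + 2) :=
      div_le_div_of_nonneg_left hδpos.le (by positivity) hba
    linarith
  have hcup : A ∩ Metric.ball c r = ⋃ k, A ∩ Metric.ball c (u k) := by
    ext z
    simp only [mem_inter_iff, mem_iUnion, mem_ball]
    constructor
    · rintro ⟨hzA, hz⟩
      obtain ⟨k, hk⟩ := exists_nat_gt (δ / (r - dist z c))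
      refine ⟨k, hzA, ?_⟩
      have hrz : 0 < r - dist z c := by linarith
      have : δ / (k + 2) < r - dist z c := by
        rw [div_lt_iff₀ (by positivity)]
        have h2 : δ / (r - dist z c) < k + 2 := by linarith [Nat.cast_nonneg (α := ℝ) k]
        calc δ = δ / (r - dist z c) * (r - dist z c) := by field_simp
          _ < (k + 2) * (r - dist z c) := by
              apply mul_lt_mul_of_pos_right h2 hrz
          _ = (r - dist z c) * (k + 2) := by ring
      simp only [hu]; linarith
    · rintro ⟨k, hzA, hz⟩
      exact ⟨hzA, hz.trans (hultr k)⟩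
  have hmono2 : Monotone (fun k => A ∩ Metric.ball c (u k)) := by
    intro a b hab
    exact inter_subset_inter_right _ (Metric.ball_subset_ball (by linarith [humono hab]))
  have hsup : volume (A ∩ Metric.ball c r) = ⨆ k, volume (A ∩ Metric.ball c (u k)) := by
    rw [hcup]; exact hmono2.measure_iUnion
  rw [hsup] at h
  obtain ⟨k, hk⟩ := lt_iSup_iff.1 h
  have hyk := huy k
  have hkr := hultr k
  have hkpos : 0 < u k := lt_of_le_of_lt dist_nonneg hyk
  generalize hgen : u k = r₀ at hk hyk hkr hkpos
  obtain ⟨c', hc'D, hc'⟩ := hD.exists_mem_open Metric.isOpen_ball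
    (⟨c, Metric.mem_ball_self (by linarith : (0:ℝ) < (r - r₀)/2)⟩)
  rw [mem_ball] at hc'
  have hcc' : dist c c' < (r - r₀)/2 := by rw [dist_comm]; exact hc'
  obtain ⟨q, hq1, hq2⟩ := exists_rat_btwn (by linarith : r₀ + dist c c' < r)
  have hqpos : 0 < (q:ℝ) := by linarith [dist_nonneg (x := c) (y := c')]
  refine ⟨c', hc'D, q, hqpos, ?_, ?_⟩
  · rw [mem_ball]
    calc dist y c' ≤ dist y c + dist c c' := dist_triangle _ _ _
      _ < r₀ + dist c c' := by linarith
      _ < q := hq1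
  · have hsub : Metric.ball c r₀ ⊆ Metric.ball c' (q:ℝ) := by
      intro z hz
      rw [mem_ball] at hz ⊢
      calc dist z c' ≤ dist z c + dist c c' := dist_triangle _ _ _
        _ < r₀ + dist c c' := by linarith
        _ < q := hq1
    have hvle : volume (Metric.ball c' (q:ℝ)) ≤ volume (Metric.ball c r) := by
      rw [Real.volume_pi_ball _ hqpos, Real.volume_pi_ball _ hr]
      apply ENNReal.ofReal_le_ofReal
      gcongr
      all_goals linarith
    calc lam * volume (Metric.ball c' (q:ℝ)) ≤ lam * volume (Metric.ball c r) :=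
          mul_le_mul_right hvle _
      _ < volume (A ∩ Metric.ball c r₀) := hk
      _ ≤ volume (A ∩ Metric.ball c' (q:ℝ)) := measure_mono (inter_subset_inter_right _ hsub)

end Aux

/-- The strong maximal operator satisfies the distributional inequality
`|{M_s(χ_Ω) > 1/100}| ≤ C |Ω|` for measurable sets `Ω ⊆ ℝ^n × ℝ^m` of finite measure. -/
theorem strong_maximal_weak_type (n m : ℕ) (hn : 1 ≤ n) (hm : 1 ≤ m) :
    ∃ C : ℝ≥0, ∀ Ω : Set (Pt n m), MeasurableSet Ω → volume Ω < ⊤ →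
      volume {x : Pt n m | (1 / 100 : ℝ≥0∞) < Ms (Ω.indicator fun _ => (1 : ℝ)) x} ≤
        (C : ℝ≥0∞) * volume Ω := by
  classical
  open Set Metric in
  refine ⟨5 ^ n * 200 * (5 ^ m * 200), ?_⟩
  intro Ω hΩ hΩfin
  set lam : ℝ≥0∞ := 1/200 with hlam
  have hlam0 : lam ≠ 0 := by rw [hlam]; norm_num
  have hlamt : lam ≠ ⊤ := by rw [hlam]; norm_num
  have hlaminv : lam⁻¹ = 200 := by rw [hlam, one_div, inv_inv]
  have hlamsum : lam + lam = 1/100 := by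
    rw [hlam, ENNReal.div_add_div_same, ENNReal.div_eq_div_iff] <;> norm_num
  obtain ⟨Dm, hDmc, hDm⟩ := TopologicalSpace.exists_countable_dense (Fin m → ℝ)
  obtain ⟨Dn, hDnc, hDn⟩ := TopologicalSpace.exists_countable_dense (Fin n → ℝ)
  -- the auxiliary set F : maximal in the second variable
  set F : Set (Pt n m) := ⋃ c ∈ Dm, ⋃ q : ℚ,
    {p : Pt n m | p.2 ∈ Metric.ball c (q:ℝ) ∧
      lam * volume (Metric.ball c (q:ℝ)) <
        volume (Prod.mk p.1 ⁻¹' Ω ∩ Metric.ball c (q:ℝ))} with hF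
  have hmeasg : ∀ (c : Fin m → ℝ) (ρ : ℝ),
      Measurable fun x : Fin n → ℝ => volume (Prod.mk x ⁻¹' Ω ∩ Metric.ball c ρ) := by
    intro c ρ
    have : ∀ x : Fin n → ℝ, Prod.mk x ⁻¹' Ω ∩ Metric.ball c ρ =
        Prod.mk x ⁻¹' (Ω ∩ (univ ×ˢ Metric.ball c ρ)) := by
      intro x; ext z; simp [and_comm]
    simp_rw [this]
    exact measurable_measure_prodMk_left (hΩ.inter (MeasurableSet.univ.prod measurableSet_ball))
  have hFmeas : MeasurableSet F := by
    rw [hF]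
    refine MeasurableSet.biUnion hDmc fun c _ => MeasurableSet.iUnion fun q => ?_
    have : {p : Pt n m | p.2 ∈ Metric.ball c (q:ℝ) ∧
        lam * volume (Metric.ball c (q:ℝ)) <
          volume (Prod.mk p.1 ⁻¹' Ω ∩ Metric.ball c (q:ℝ))} =
        (Prod.snd ⁻¹' Metric.ball c (q:ℝ)) ∩
        (Prod.fst ⁻¹' {x | lam * volume (Metric.ball c (q:ℝ)) <
          volume (Prod.mk x ⁻¹' Ω ∩ Metric.ball c (q:ℝ))}) := by
      ext p; simp [mem_setOf_eq, and_comm]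
    rw [this]
    exact (measurable_snd measurableSet_ball).inter
      (measurable_fst (measurableSet_lt measurable_const (hmeasg c q)))
  -- slices of F are contained in weak sets for slices of Ω
  have hFslice : ∀ x : Fin n → ℝ, Prod.mk x ⁻¹' F ⊆ weakSet m lam (Prod.mk x ⁻¹' Ω) := by
    intro x y hy
    simp only [hF, mem_preimage, mem_iUnion, mem_setOf_eq] at hy
    obtain ⟨c, _, q, hyq, hlt⟩ := hy
    have hq : 0 < (q:ℝ) := by
      rcases le_or_gt (q:ℝ) 0 with h | h
      · rw [Metric.ball_eq_empty.2 h] at hyq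
        exact absurd hyq (notMem_empty _)
      · exact h
    exact ⟨c, q, hq, hyq, hlt⟩
  -- volume bound for F
  have hFvol : volume F ≤ 5 ^ m * lam⁻¹ * volume Ω := by
    rw [MeasureTheory.Measure.volume_eq_prod, Measure.prod_apply hFmeas,
      Measure.prod_apply hΩ, ← lintegral_const_mul' _ _
        (ENNReal.mul_ne_top (ENNReal.pow_ne_top (by norm_num)) (ENNReal.inv_ne_top.2 hlam0))]
    apply lintegral_mono
    intro x
    exact (measure_mono (hFslice x)).trans
      (weak_bound hm lam hlam0 hlamt _ (hΩ.preimage measurable_prodMk_left))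
  -- membership criterion for F
  have hFmem : ∀ (x : Fin n → ℝ) (y : Fin m → ℝ) (c : Fin m → ℝ) (r : ℝ), 0 < r →
      y ∈ Metric.ball c r →
      lam * volume (Metric.ball c r) < volume (Prod.mk x ⁻¹' Ω ∩ Metric.ball c r) →
      (x, y) ∈ F := by
    intro x y c r hr hy hlt
    obtain ⟨c', hc', q, hq, hyq, hltq⟩ := exists_rat_ball (Prod.mk x ⁻¹' Ω) lam hDm hr hy hlt
    simp only [hF, mem_iUnion, mem_setOf_eq]
    exact ⟨c', hc', q, hyq, hltq⟩
  -- the set S : maximal in the first variable applied to F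
  set S : Set (Pt n m) := ⋃ c ∈ Dn, ⋃ q : ℚ,
    {p : Pt n m | p.1 ∈ Metric.ball c (q:ℝ) ∧
      lam * volume (Metric.ball c (q:ℝ)) <
        volume ((fun x => (x, p.2)) ⁻¹' F ∩ Metric.ball c (q:ℝ))} with hS
  have hmeash : ∀ (c : Fin n → ℝ) (ρ : ℝ),
      Measurable fun y : Fin m → ℝ => volume ((fun x => (x, y)) ⁻¹' F ∩ Metric.ball c ρ) := by
    intro c ρ
    have : ∀ y : Fin m → ℝ, (fun x => (x, y)) ⁻¹' F ∩ Metric.ball c ρ =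
        (fun x => (x, y)) ⁻¹' (F ∩ (Metric.ball c ρ ×ˢ univ)) := by
      intro y; ext z; simp [and_comm]
    simp_rw [this]
    exact measurable_measure_prodMk_right (hFmeas.inter (measurableSet_ball.prod MeasurableSet.univ))
  have hSmeas : MeasurableSet S := by
    rw [hS]
    refine MeasurableSet.biUnion hDnc fun c _ => MeasurableSet.iUnion fun q => ?_
    have : {p : Pt n m | p.1 ∈ Metric.ball c (q:ℝ) ∧
        lam * volume (Metric.ball c (q:ℝ)) <
          volume ((fun x => (x, p.2)) ⁻¹' F ∩ Metric.ball c (q:ℝ))} =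
        (Prod.fst ⁻¹' Metric.ball c (q:ℝ)) ∩
        (Prod.snd ⁻¹' {y | lam * volume (Metric.ball c (q:ℝ)) <
          volume ((fun x => (x, y)) ⁻¹' F ∩ Metric.ball c (q:ℝ))}) := by
      ext p; simp [mem_setOf_eq, and_comm]
    rw [this]
    exact (measurable_fst measurableSet_ball).inter
      (measurable_snd (measurableSet_lt measurable_const (hmeash c q)))
  have hSslice : ∀ y : Fin m → ℝ,
      (fun x => (x, y)) ⁻¹' S ⊆ weakSet n lam ((fun x => (x, y)) ⁻¹' F) := by
    intro y x hx
    simp only [hS, mem_preimage, mem_iUnion, mem_setOf_eq] at hx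
    obtain ⟨c, _, q, hxq, hlt⟩ := hx
    have hq : 0 < (q:ℝ) := by
      rcases le_or_gt (q:ℝ) 0 with h | h
      · rw [Metric.ball_eq_empty.2 h] at hxq
        exact absurd hxq (notMem_empty _)
      · exact h
    exact ⟨c, q, hq, hxq, hlt⟩
  have hSvol : volume S ≤ 5 ^ n * lam⁻¹ * volume F := by
    rw [MeasureTheory.Measure.volume_eq_prod, Measure.prod_apply_symm hSmeas,
      Measure.prod_apply_symm hFmeas, ← lintegral_const_mul' _ _
        (ENNReal.mul_ne_top (ENNReal.pow_ne_top (by norm_num)) (ENNReal.inv_ne_top.2 hlam0))]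
    apply lintegral_mono
    intro y
    exact (measure_mono (hSslice y)).trans
      (weak_bound hn lam hlam0 hlamt _ (hFmeas.preimage measurable_prodMk_right))
  have hSmem : ∀ (x : Fin n → ℝ) (y : Fin m → ℝ) (c : Fin n → ℝ) (r : ℝ), 0 < r →
      x ∈ Metric.ball c r →
      lam * volume (Metric.ball c r) < volume ((fun x' => (x', y)) ⁻¹' F ∩ Metric.ball c r) →
      (x, y) ∈ S := by
    intro x y c r hr hx hlt
    obtain ⟨c', hc', q, hq, hxq, hltq⟩ :=
      exists_rat_ball ((fun x' => (x', y)) ⁻¹' F) lam hDn hr hx hlt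
    simp only [hS, mem_iUnion, mem_setOf_eq]
    exact ⟨c', hc', q, hxq, hltq⟩
  -- main inclusion : the superlevel set of Ms is contained in S
  have hincl : {p : Pt n m | (1 / 100 : ℝ≥0∞) < Ms (Ω.indicator fun _ => (1 : ℝ)) p} ⊆ S := by
    intro p hp
    simp only [mem_setOf_eq, Ms, lt_iSup_iff] at hp
    obtain ⟨c₁, r₁, c₂, r₂, hr₁, hr₂, hmem, hlt⟩ := hp
    rw [openCube_eq_ball c₁ hr₁, openCube_eq_ball c₂ hr₂] at hmem hlt
    set B₁ := Metric.ball c₁ r₁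
    set B₂ := Metric.ball c₂ r₂
    have hB₁pos : 0 < volume B₁ := measure_ball_pos _ _ hr₁
    have hB₂pos : 0 < volume B₂ := measure_ball_pos _ _ hr₂
    have hB₁fin : volume B₁ < ⊤ := measure_ball_lt_top
    have hB₂fin : volume B₂ < ⊤ := measure_ball_lt_top
    have hPvol : volume (B₁ ×ˢ B₂) = volume B₁ * volume B₂ := by
      rw [MeasureTheory.Measure.volume_eq_prod, Measure.prod_prod]
    -- compute the integral of the indicator
    have hint : (∫⁻ z in B₁ ×ˢ B₂, ‖(Ω.indicator fun _ => (1:ℝ)) z‖₊) =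
        volume (Ω ∩ B₁ ×ˢ B₂) := by
      have hfun : (fun z => (‖(Ω.indicator fun _ => (1:ℝ)) z‖₊ : ℝ≥0∞)) =
          Ω.indicator fun _ => (1:ℝ≥0∞) := by
        ext z
        by_cases hz : z ∈ Ω <;> simp [Set.indicator_of_mem, Set.indicator_of_notMem, hz]
      rw [hfun, lintegral_indicator hΩ, setLIntegral_one, Measure.restrict_apply hΩ]
    rw [hint] at hlt
    -- turn the average into a measure inequality
    have h100 : (1/100 : ℝ≥0∞) * volume (B₁ ×ˢ B₂) < volume (Ω ∩ B₁ ×ˢ B₂) := by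
      rw [← ENNReal.div_eq_inv_mul] at hlt
      exact (ENNReal.lt_div_iff_mul_lt (Or.inl (by rw [hPvol]; exact (ENNReal.mul_pos hB₁pos.ne' hB₂pos.ne').ne'))
        (Or.inl (by rw [hPvol]; exact ENNReal.mul_ne_top hB₁fin.ne hB₂fin.ne))).1 hlt
    -- the set of good first coordinates
    set T : Set (Fin n → ℝ) :=
      {x | lam * volume B₂ < volume (Prod.mk x ⁻¹' Ω ∩ B₂)} with hT
    have hTmeas : MeasurableSet T := measurableSet_lt measurable_const (hmeasg c₂ r₂)
    -- main estimate : T covers a definite proportion of B₁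
    have hTbig : lam * volume B₁ < volume (T ∩ B₁) := by
      by_contra hcon
      push_neg at hcon
      have hslice : ∀ x : Fin n → ℝ,
          volume (Prod.mk x ⁻¹' (Ω ∩ B₁ ×ˢ B₂)) ≤
            (T ∩ B₁).indicator (fun _ => volume B₂) x +
              B₁.indicator (fun _ => lam * volume B₂) x := by
        intro x
        by_cases hx1 : x ∈ B₁
        · have hpre : Prod.mk x ⁻¹' (Ω ∩ B₁ ×ˢ B₂) = Prod.mk x ⁻¹' Ω ∩ B₂ := by
            ext z; simp [hx1]
          rw [hpre]
          by_cases hxT : x ∈ T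
          · rw [Set.indicator_of_mem (Set.mem_inter hxT hx1), Set.indicator_of_mem hx1]
            exact le_add_right (measure_mono inter_subset_right)
          · rw [Set.indicator_of_notMem (fun hc => hxT hc.1), Set.indicator_of_mem hx1,
              zero_add]
            exact not_lt.1 hxT
        · have hpre : Prod.mk x ⁻¹' (Ω ∩ B₁ ×ˢ B₂) = ∅ := by
            ext z; simp [hx1]
          rw [hpre, Set.indicator_of_notMem (fun hc => hx1 hc.2),
            Set.indicator_of_notMem hx1]
          simp
      have hchain : volume (Ω ∩ B₁ ×ˢ B₂) ≤
          volume (T ∩ B₁) * volume B₂ + volume B₁ * (lam * volume B₂) := by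
        calc volume (Ω ∩ B₁ ×ˢ B₂)
            = ∫⁻ x, volume (Prod.mk x ⁻¹' (Ω ∩ B₁ ×ˢ B₂)) := by
              rw [MeasureTheory.Measure.volume_eq_prod,
                Measure.prod_apply (hΩ.inter ((measurableSet_ball).prod measurableSet_ball))]
          _ ≤ ∫⁻ x, ((T ∩ B₁).indicator (fun _ => volume B₂) x +
                B₁.indicator (fun _ => lam * volume B₂) x) := lintegral_mono hslice
          _ = volume (T ∩ B₁) * volume B₂ + volume B₁ * (lam * volume B₂) := by
              rw [lintegral_add_left ((measurable_const).indicator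
                (hTmeas.inter measurableSet_ball)),
                lintegral_indicator_const (hTmeas.inter measurableSet_ball),
                lintegral_indicator_const measurableSet_ball]
              ring
      have hfinal : volume (Ω ∩ B₁ ×ˢ B₂) ≤ (1/100 : ℝ≥0∞) * volume (B₁ ×ˢ B₂) := by
        calc volume (Ω ∩ B₁ ×ˢ B₂)
            ≤ volume (T ∩ B₁) * volume B₂ + volume B₁ * (lam * volume B₂) := hchain
          _ ≤ lam * volume B₁ * volume B₂ + volume B₁ * (lam * volume B₂) := by
              gcongr
          _ = (lam + lam) * (volume B₁ * volume B₂) := by ring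
          _ = (1/100 : ℝ≥0∞) * volume (B₁ ×ˢ B₂) := by rw [hlamsum, hPvol]
      exact absurd h100 (not_lt.2 hfinal)
    obtain ⟨hp1, hp2⟩ := hmem
    -- every point of T lands in F paired with p.2
    have hTF : T ∩ B₁ ⊆ (fun x' => (x', p.2)) ⁻¹' F := by
      rintro x' ⟨hx'T, _⟩
      exact hFmem x' p.2 c₂ r₂ hr₂ hp2 hx'T
    have hFbig : lam * volume B₁ < volume ((fun x' => (x', p.2)) ⁻¹' F ∩ B₁) :=
      hTbig.trans_le (measure_mono (fun z hz => ⟨hTF hz, hz.2⟩))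
    have := hSmem p.1 p.2 c₁ r₁ hr₁ hp1 hFbig
    simpa using this
  -- conclusion
  calc volume {x : Pt n m | (1 / 100 : ℝ≥0∞) < Ms (Ω.indicator fun _ => (1 : ℝ)) x}
      ≤ volume S := measure_mono hincl
    _ ≤ 5 ^ n * lam⁻¹ * volume F := hSvol
    _ ≤ 5 ^ n * lam⁻¹ * (5 ^ m * lam⁻¹ * volume Ω) := mul_le_mul_right hFvol _
    _ = ((5 ^ n * 200 * (5 ^ m * 200) : ℝ≥0) : ℝ≥0∞) * volume Ω := by
        rw [hlaminv]
        push_cast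
        ring
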